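/- For any set A in a topological space, sbd (sint A) ⊆ sbd A (Theorem 3.19(2)). -/

import Mathlib

open Set Topology

variable {X : Type*} [TopologicalSpace X]

/-- A set is semi-open if it lies between an open set and its closure. -/
def SemiOpen (A : Set X) : Prop :=
  ∃ U : Set X, IsOpen U ∧ U ⊆ A ∧ A ⊆ closure U

/-- A set is semi-closed if its complement is semi-open. -/
def SemiClosed (A : Set X) : Prop :=
  SemiOpen Aᶜ

/-- Semi-interior: the union of all semi-open subsets of `A`. -/
def sint (A : Set X) : Set X :=
  ⋃₀ {S : Set X | SemiOpen S ∧ S ⊆ A}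

/-- Semi-closure: the intersection of all semi-closed supersets of `A`. -/
def scl (A : Set X) : Set X :=
  ⋂₀ {C : Set X | SemiClosed C ∧ A ⊆ C}

/-- Semi-exterior: the semi-interior of the complement. -/
def sext (A : Set X) : Set X :=
  sint Aᶜ

/-- Semi-boundary. -/
def sbd (A : Set X) : Set X :=
  (sint A ∪ sext A)ᶜ

lemma semiOpen_sUnion {𝒮 : Set (Set X)} (h : ∀ S ∈ 𝒮, SemiOpen S) :
    SemiOpen (⋃₀ 𝒮) := by
  choose U hU using h
  refine ⟨⋃ S : 𝒮, U S S.2, isOpen_iUnion fun S => (hU S S.2).1, ?_, ?_⟩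
  · exact iUnion_subset fun S => (hU S S.2).2.1.trans (subset_sUnion_of_mem S.2)
  · refine sUnion_subset fun S hS => (hU S hS).2.2.trans (closure_mono ?_)
    exact subset_iUnion_of_subset (⟨S, hS⟩ : 𝒮) subset_rfl

lemma semiOpen_sint (A : Set X) : SemiOpen (sint A) :=
  semiOpen_sUnion fun _ hS => hS.1

lemma sint_subset (A : Set X) : sint A ⊆ A :=
  sUnion_subset fun _ hS => hS.2

lemma sint_mono {A B : Set X} (h : A ⊆ B) : sint A ⊆ sint B :=
  sUnion_subset_sUnion fun _ hS => ⟨hS.1, hS.2.trans h⟩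

lemma sext_anti {A B : Set X} (h : A ⊆ B) : sext B ⊆ sext A :=
  sint_mono (compl_subset_compl.2 h)

lemma sint_sint (A : Set X) : sint (sint A) = sint A :=
  (sint_subset _).antisymm (subset_sUnion_of_mem ⟨semiOpen_sint A, subset_rfl⟩)

theorem sbd_sint_subset (A : Set X) : sbd (sint A) ⊆ sbd A :=
  compl_subset_compl.2 (union_subset_union (sint_sint A).ge (sext_anti (sint_subset A)))
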